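/- arXiv:1507.05015 — 2 statements merged into one kernel-verified Lean document; each statement's English description precedes it below -/
import Mathlib

section
/- Let η be a countable ordinal and C a nonempty clopen subset of 2^ω. Then ℕ^η_0 ∩ C² is not separable from ℕ^η_1 ∩ C² by a pot(D_η(Σ^0_1)) set. -/
/-!
Suppose `D((O_θ)_{θ<η})` separates the two sets, each `O_θ` being open for finer Polish
topologies, hence a countable union of Borel rectangles `U × V`. Write
`p_s γ = (t⁰_s ⌢ γ, t¹_s ⌢ γ)` (`pairMap φ s`). Since `p_s γ ∈ ℕ^η_{|s| mod 2}`, the least `θ`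
with `p_s γ ∈ O_θ` has a parity fixed by the parity of `|s|`.

If `O_θ` is comeager along `p_s` on a basic clopen set `N_w = cyl w`, with `θ < φ_η(s)`
(`DescentState`), then some rectangle `U × V ⊆ O_θ` is comeager along `p_s` on some `N_v`. Pick a child `s ⌢ q` with
`φ_η(s ⌢ q) ≥ θ` and `ψ(q)` extending `v`. The two coordinates of `p_{s⌢q} γ` are the first
coordinate of `p_s` at one point of `N_v` and the second coordinate of `p_s` at another, so
generically `p_{s⌢q} γ ∈ U × V ⊆ O_θ`. Its least index is then at most `θ` and of the other
parity, hence below `θ`, and by the Baire category theorem one such index is again comeager on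
some `N_{w'}`. Starting from `s = ∅` on the nonempty open set `C`, this yields an infinite
decreasing sequence of ordinals.
-/

open Set Function

abbrev Cantor : Type := ℕ → Bool
abbrev Baire : Type := ℕ → ℕ

abbrev SetClass : Type 1 := (Z : Type) → TopologicalSpace Z → Set Z → Prop

/-- `S` is a Borel subset of `Z`. -/
def IsBorel {Z : Type} [TopologicalSpace Z] (S : Set Z) : Prop :=
  @MeasurableSet Z (borel Z) S

/-- the inverse `A⁻¹` of a relation. -/
def relInv {X : Type} (A : Set (X × X)) : Set (X × X) := {p | (p.2, p.1) ∈ A}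

/-- the symmetrization `s(A) = A ∪ A⁻¹` of a relation. -/
def symmRel {X : Type} (A : Set (X × X)) : Set (X × X) := A ∪ relInv A

def IsIrreflRel {X : Type} (A : Set (X × X)) : Prop := ∀ x : X, (x, x) ∉ A

def IsAntisymmRel {X : Type} (A : Set (X × X)) : Prop :=
  ∀ x y : X, (x, y) ∈ A → (y, x) ∈ A → x = y

/-- an oriented graph is an irreflexive antisymmetric relation. -/
def IsOrientedGraph {X : Type} (A : Set (X × X)) : Prop := IsIrreflRel A ∧ IsAntisymmRel A

/-- a relation is acyclic if there is no injective sequence `(x_i)_{i ≤ n}` with `n ≥ 2`,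
`(x_i, x_{i+1}) ∈ A` for `i < n` and `(x_n, x_0) ∈ A`. -/
def AcyclicRel {X : Type} (A : Set (X × X)) : Prop :=
  ¬ ∃ (n : ℕ) (x : ℕ → X), 2 ≤ n ∧ (∀ i j, i ≤ n → j ≤ n → x i = x j → i = j) ∧
      (∀ i, i < n → (x i, x (i + 1)) ∈ A) ∧ (x n, x 0) ∈ A

/-- `A` is s-acyclic if `s(A)` is acyclic. -/
def SAcyclic {X : Type} (A : Set (X × X)) : Prop := AcyclicRel (symmRel A)

/-- a set is locally countable if all of its vertical and horizontal sections are countable. -/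
def LocallyCountable {X Y : Type} (A : Set (X × Y)) : Prop :=
  (∀ x : X, {y : Y | (x, y) ∈ A}.Countable) ∧ (∀ y : Y, {x : X | (x, y) ∈ A}.Countable)

/-- a space is zero-dimensional if it has a neighborhood basis of clopen sets. -/
def ZeroDimensional (Z : Type) [TopologicalSpace Z] : Prop :=
  ∀ x : Z, ∀ U ∈ nhds x, ∃ V : Set Z, IsClopen V ∧ x ∈ V ∧ V ⊆ U

/-- `B ⊆ X × Y` is potentially in the class `Γ`: there are finer Polish topologies on `X` and
on `Y` for which `B` belongs to `Γ` computed in the corresponding product space. -/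
def Potentially (Γ : SetClass) {X Y : Type} [tX : TopologicalSpace X] [tY : TopologicalSpace Y]
    (B : Set (X × Y)) : Prop :=
  ∃ (σ : TopologicalSpace X) (τ : TopologicalSpace Y),
    σ ≤ tX ∧ τ ≤ tY ∧ @PolishSpace X σ ∧ @PolishSpace Y τ ∧
      Γ (X × Y) (@instTopologicalSpaceProd X Y σ τ) B

/-- `A` is separable from `B` by a `pot(Γ)` set. -/
def SepPot (Γ : SetClass) {X Y : Type} [TopologicalSpace X] [TopologicalSpace Y]
    (A B : Set (X × Y)) : Prop :=
  ∃ S : Set (X × Y), Potentially Γ S ∧ A ⊆ S ∧ Disjoint S B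

def openClass : SetClass := fun Z t S => @IsOpen Z t S

def closedClass : SetClass := fun Z t S => @IsClosed Z t S

/-- the class `Σ^0_2` of countable unions of closed sets. -/
def sigma02Class : SetClass := fun Z t S =>
  ∃ F : ℕ → Set Z, (∀ n, @IsClosed Z t (F n)) ∧ S = ⋃ n, F n

/-- the class `Π^0_2` of countable intersections of open sets. -/
def pi02Class : SetClass := fun Z t S =>
  ∃ U : ℕ → Set Z, (∀ n, @IsOpen Z t (U n)) ∧ S = ⋂ n, U n

/-- the class `Δ^0_2 = Σ^0_2 ∩ Π^0_2`. -/
def delta02Class : SetClass := fun Z t S => sigma02Class Z t S ∧ pi02Class Z t S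

/-- the dual class `Ď` of complements of sets in `Γ`. -/
def dualClass (Γ : SetClass) : SetClass := fun Z t S => Γ Z t Sᶜ

def interClass (Γ Γ' : SetClass) : SetClass := fun Z t S => Γ Z t S ∧ Γ' Z t S

/-- standard parity of an ordinal: the parity of its finite part. -/
def OrdEven (o : Ordinal.{0}) : Prop := Even (o % Ordinal.omega0)

/-- the difference set `D((O_θ)_{θ<η})`. -/
def DiffSet {Z : Type} (η : Ordinal.{0}) (O : Ordinal.{0} → Set Z) : Set Z :=
  {x | ∃ θ, θ < η ∧ (OrdEven θ ↔ ¬ OrdEven η) ∧ x ∈ O θ ∧ ∀ θ', θ' < θ → x ∉ O θ'}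

/-- the class `D_η(Γ)` of `η`-differences of increasing sequences of sets in `Γ`. -/
def DClass (η : Ordinal.{0}) (Γ : SetClass) : SetClass := fun Z t S =>
  ∃ O : Ordinal.{0} → Set Z, (∀ θ, θ < η → Γ Z t (O θ)) ∧
    (∀ θ₁ θ₂, θ₁ ≤ θ₂ → θ₂ < η → O θ₁ ⊆ O θ₂) ∧ S = DiffSet η O

/-- choice between a relation and its inverse. -/
def cSel {X : Type} (b : Bool) (C : Set (X × X)) : Set (X × X) :=
  if b then C else relInv C

/-- quasi-acyclicity of a relation on a Polish space. -/
def QuasiAcyclic {X : Type} [TopologicalSpace X] (A : Set (X × X)) : Prop :=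
  ∃ C : ℕ → Set (X × X),
    (∀ n, Potentially closedClass (C n)) ∧
    (∀ m n, m ≠ n → Disjoint (C m) (C n)) ∧
    (⋃ n, C n) = A ∧
    ∀ z₀ z₁ z₂ : X, (z₀, z₁) ∈ symmRel A → (z₁, z₂) ∈ symmRel A → z₀ ≠ z₂ →
      ∀ (k : ℕ) (nn : ℕ → ℕ) (ε : ℕ → Bool) (x y : ℕ → X), 1 ≤ k →
        (∀ i, 1 ≤ i → i ≤ k →
          x i ≠ z₀ ∧ x i ≠ z₁ ∧ x i ≠ z₂ ∧ y i ≠ z₀ ∧ y i ≠ z₁ ∧ y i ≠ z₂) →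
        (z₀, x 1) ∈ cSel (ε 1) (C (nn 1)) →
        (z₂, y 1) ∈ cSel (ε 1) (C (nn 1)) →
        (∀ i, 2 ≤ i → i ≤ k →
          (x (i - 1), x i) ∈ cSel (ε i) (C (nn i)) ∧
          (y (i - 1), y i) ∈ cSel (ε i) (C (nn i))) →
        x k ≠ y k

/-- `(X, Y, A, B) ⊑ (X', Y', A', B')` : reduction by a pair of injective continuous maps. -/
def Reducible {X Y X' Y' : Type} [TopologicalSpace X] [TopologicalSpace Y]
    [TopologicalSpace X'] [TopologicalSpace Y']
    (A B : Set (X × Y)) (A' B' : Set (X' × Y')) : Prop :=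
  ∃ (f : X → X') (g : Y → Y'), Continuous f ∧ Continuous g ∧
    Function.Injective f ∧ Function.Injective g ∧
    (∀ p ∈ A, (f p.1, g p.2) ∈ A') ∧ (∀ p ∈ B, (f p.1, g p.2) ∈ B')

/-- reduction via a square map `f × f`. -/
def SqReducible {X X' : Type} [TopologicalSpace X] [TopologicalSpace X']
    (A B : Set (X × X)) (A' B' : Set (X' × X')) : Prop :=
  ∃ f : X → X', Continuous f ∧ Function.Injective f ∧
    (∀ p ∈ A, (f p.1, f p.2) ∈ A') ∧ (∀ p ∈ B, (f p.1, f p.2) ∈ B')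

/-- a set is `K_σ` if it is a countable union of compact sets. -/
def IsKSigma {Z : Type} [TopologicalSpace Z] (S : Set Z) : Prop :=
  ∃ K : ℕ → Set Z, (∀ n, IsCompact (K n)) ∧ S = ⋃ n, K n

/-- Wadge classes of Borel sets. -/
def IsWadgeClassOfBorel (Γ : SetClass) : Prop :=
  ∃ A : Set Baire, IsBorel A ∧
    ∀ (Z : Type) [tZ : TopologicalSpace Z], PolishSpace Z → ZeroDimensional Z →
      ∀ S : Set Z, (Γ Z tZ S ↔ ∃ f : Z → Baire, Continuous f ∧ S = f ⁻¹' A)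

/-- the Borel classes `Σ^0_ξ`, `ξ ≥ 1`. -/
inductive IsSigma0 : Ordinal.{0} → (Z : Type) → TopologicalSpace Z → Set Z → Prop
  | base (Z : Type) (t : TopologicalSpace Z) (S : Set Z) :
      @IsOpen Z t S → IsSigma0 1 Z t S
  | iUnion (Z : Type) (t : TopologicalSpace Z) (ξ : Ordinal.{0}) (o : ℕ → Ordinal.{0})
      (f : ℕ → Set Z) : 1 < ξ → (∀ n, (1 : Ordinal.{0}) ≤ o n) → (∀ n, o n < ξ) →
      (∀ n, IsSigma0 (o n) Z t (f n)ᶜ) → IsSigma0 ξ Z t (⋃ n, f n)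

/-- the family of classes `D_η(Σ^0_1)`, `Ď_η(Σ^0_1)` (`1 ≤ η < ω₁`), `D_n(Σ^0_2)`,
`Ď_n(Σ^0_2)` (`1 ≤ n < ω`) and `Δ^0_2`. -/
def GammaFamily (Γ : SetClass) : Prop :=
  (∃ η : Ordinal.{0}, 1 ≤ η ∧ η.card ≤ Cardinal.aleph0 ∧ Γ = DClass η openClass) ∨
  (∃ η : Ordinal.{0}, 1 ≤ η ∧ η.card ≤ Cardinal.aleph0 ∧ Γ = dualClass (DClass η openClass)) ∨
  (∃ n : ℕ, 1 ≤ n ∧ Γ = DClass (n : Ordinal.{0}) sigma02Class) ∨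
  (∃ n : ℕ, 1 ≤ n ∧ Γ = dualClass (DClass (n : Ordinal.{0}) sigma02Class)) ∨
  Γ = delta02Class

/-- specification of the map `φ_η : ω^{<ω} → {-1} ∪ (η+1)`, where `none` codes `-1`. -/
def PhiSpec (η : Ordinal.{0}) (φ : List ℕ → Option Ordinal.{0}) : Prop :=
  φ [] = some η ∧
  (∀ s o, φ s = some o → o ≤ η) ∧
  (∀ s n, φ s = none → φ (s ++ [n]) = none) ∧
  (∀ s n, φ s = some 0 → φ (s ++ [n]) = none) ∧
  (∀ s θ n, φ s = some (θ + 1) → φ (s ++ [n]) = some θ) ∧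
  (∀ s o, φ s = some o → Order.IsSuccLimit o →
    ∃ θf : ℕ → Ordinal.{0}, (∀ n, φ (s ++ [n]) = some (θf n)) ∧ StrictMono θf ∧
      (∀ n, ¬ OrdEven (θf n)) ∧ ∀ β, β < o → ∃ n, β ≤ θf n)

/-- the prime coding `I(s) = p_0^{s(0)+1} ⋯ p_{|s|-1}^{s(|s|-1)+1}`, `I(∅) = 0`. -/
noncomputable def Ifun (s : List ℕ) : ℕ :=
  if s = [] then 0
  else ∏ i ∈ Finset.range s.length, (Nat.nth Nat.Prime i) ^ (s.getD i 0 + 1)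

/-- the bijection `⟨·⟩_η : T_η → ω`, increasing with respect to `I`. -/
noncomputable def cEnum (φ : List ℕ → Option Ordinal.{0}) (s : List ℕ) : ℕ :=
  Nat.card {t : List ℕ // φ t ≠ none ∧ Ifun t < Ifun s}

/-- the length-lexicographic enumeration `∅, 0, 1, 00, 01, 10, 11, …` of `2^{<ω}`. -/
def lexEnum (n : ℕ) : List Bool := ((n + 1).bits).dropLast.reverse

/-- the map `ψ` enumerating `∅, ∅, 0, 0, 1, 1, 00, 00, 01, 01, …`. -/
def psiFun (q : ℕ) : List Bool := lexEnum (q / 2)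

noncomputable def tAux (φ : List ℕ → Option Ordinal.{0}) (ε : Bool) : List ℕ → List Bool
  | [] => []
  | q :: r =>
      tAux φ ε r ++ psiFun q ++
        List.replicate
          (cEnum φ (r.reverse ++ [q]) - cEnum φ r.reverse - (psiFun q).length - 1) false ++
        [ε]

/-- the sequences `t^ε_s` for `s ∈ T_η`. -/
noncomputable def tSeq (φ : List ℕ → Option Ordinal.{0}) (ε : Bool) (s : List ℕ) : List Bool :=
  tAux φ ε s.reverse

/-- the concatenation `u ⌢ γ ∈ 2^ω` of a finite sequence with an infinite one. -/
def appendSeq (u : List Bool) (γ : Cantor) : Cantor :=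
  fun n => if n < u.length then u.getD n false else γ (n - u.length)

/-- the sets `ℕ^η_ε = {(t^0_s ⌢ γ, t^1_s ⌢ γ) | s ∈ T_η, parity(|s|) = ε}`,
where `ε = false` codes `0` and `ε = true` codes `1`. -/
noncomputable def NNset (φ : List ℕ → Option Ordinal.{0}) (ε : Bool) : Set (Cantor × Cantor) :=
  {p | ∃ (s : List ℕ) (γ : Cantor), φ s ≠ none ∧ (Even s.length ↔ ε = false) ∧
      p.1 = appendSeq (tSeq φ false s) γ ∧ p.2 = appendSeq (tSeq φ true s) γ}

/-- the sets `𝕊^η_ε = {(t^0_s ⌢ γ, t^1_s ⌢ γ) | s ∈ T_η \ {∅},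
parity(|s|) = 1 - |parity(s(0)) - ε|}`. -/
noncomputable def SSset (φ : List ℕ → Option Ordinal.{0}) (ε : Bool) : Set (Cantor × Cantor) :=
  {p | ∃ (s : List ℕ) (γ : Cantor), φ s ≠ none ∧ s ≠ [] ∧
      ((¬ Even s.length) ↔ (Even (s.headD 0) ↔ ε = false)) ∧
      p.1 = appendSeq (tSeq φ false s) γ ∧ p.2 = appendSeq (tSeq φ true s) γ}

/-- prepending a digit to an element of the Cantor space. -/
def consSeq (b : Bool) (α : Cantor) : Cantor := fun n => if n = 0 then b else α (n - 1)

/-- the relation `{(0⌢α, 1⌢β) | (α, β) ∈ A}`. -/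
def prep01 (A : Set (Cantor × Cantor)) : Set (Cantor × Cantor) :=
  {p | ∃ q ∈ A, p.1 = consSeq false q.1 ∧ p.2 = consSeq true q.2}

/-- the sets `𝔹^η_ε = {(0⌢α, 1⌢β) | (α, β) ∈ ℕ^η_ε}`. -/
noncomputable def BBset (φ : List ℕ → Option Ordinal.{0}) (ε : Bool) : Set (Cantor × Cantor) :=
  prep01 (NNset φ ε)

/-- the sets `ℂ^η_ε = {(0⌢α, 1⌢β) | (α, β) ∈ 𝕊^η_ε}`. -/
noncomputable def CCset (φ : List ℕ → Option Ordinal.{0}) (ε : Bool) : Set (Cantor × Cantor) :=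
  prep01 (SSset φ ε)

/-- the initial segment `α | l` of `α ∈ 2^ω`. -/
def listInit (α : Cantor) (l : ℕ) : List Bool := (List.range l).map α

/-- frames, generating trees on `2 × 2`. -/
def IsFrame (F : ℕ → List Bool × List Bool) : Prop :=
  (∀ l : ℕ, (F l).1.length = l ∧ (F l).2.length = l) ∧
  (∀ p q : ℕ, ∀ w : List Bool, ∃ N : ℕ,
      (∃ l : ℕ, F l =
        ((F q).1 ++ false :: (w ++ List.replicate N false),
         (F q).2 ++ true :: (w ++ List.replicate N false))) ∧
      (((F q).1.length + 1 + w.length + N) - 1).unpair.1 = p) ∧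
  (∀ l : ℕ, 0 < l → ∃ q : ℕ, q < l ∧ ∃ w : List Bool,
      (F l).1 = (F q).1 ++ false :: w ∧ (F l).2 = (F q).2 ++ true :: w)

/-- the tree on `2 × 2` generated by a frame. -/
def frameTree (F : ℕ → List Bool × List Bool) : Set (List Bool × List Bool) :=
  {p | p.1.length = p.2.length ∧
      (p.1 = [] ∨ ∃ (q : ℕ) (w : List Bool),
        p.1 = (F q).1 ++ false :: w ∧ p.2 = (F q).2 ++ true :: w)}

/-- the body `⌈T⌉` of a tree on `2 × 2`. -/
def treeBody (T : Set (List Bool × List Bool)) : Set (Cantor × Cantor) :=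
  {p | ∀ l : ℕ, (listInit p.1 l, listInit p.2 l) ∈ T}

/-- the equivalence relation `𝔼_0` of eventual agreement. -/
def E0rel : Set (Cantor × Cantor) := {p | ∃ m : ℕ, ∀ n, m < n → p.1 n = p.2 n}

/-- the sets `𝔼^ε_0`. -/
def E0par (ε : ℕ) : Set (Cantor × Cantor) :=
  {p | ∃ m : ℕ, 0 < m ∧ p.1 m ≠ p.2 m ∧ (∀ n, m < n → p.1 n = p.2 n) ∧
      (m - 1).unpair.1 % 2 = ε}

/-- the shift map `S : 2^ω → 2^ω`. -/
def shiftSeq (α : Cantor) : Cantor := fun m => α (m + 1)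

/-- the symmetric difference of two elements of `2^ω`. -/
def xorSeq (α β : Cantor) : Cantor := fun m => xor (α m) (β m)

/-- the set `C_0` of eventually null sequences. -/
def Czero : Set Cantor := {α | ∃ m : ℕ, ∀ p, m ≤ p → α p = false}

/-- the sets `C_θ` built from a surjection `S` onto `η`. -/
def CTheta (S : ℕ → Ordinal.{0}) : Ordinal.{0} → Set Cantor := fun θ =>
  if θ = 0 then Czero
  else {α | ∃ m : ℕ, (∀ p : ℕ, α (Nat.pair m p) = false) ∧ S (Nat.unpair m).1 ≤ θ}

/-- the set `D_η = D((C_θ)_{θ<η})`. -/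
def DEtaSet (η : Ordinal.{0}) (S : ℕ → Ordinal.{0}) : Set Cantor := DiffSet η (CTheta S)

/-- the set `ℕ_n = {(α, β) ∈ ⌈T⌉ | S(α Δ β) ∉ D_n}`. -/
def NDn (F : ℕ → List Bool × List Bool) (n : ℕ) (Sn : ℕ → ℕ) : Set (Cantor × Cantor) :=
  {p | p ∈ treeBody (frameTree F) ∧
      shiftSeq (xorSeq p.1 p.2) ∉ DEtaSet (n : Ordinal.{0}) (fun m => (Sn m : Ordinal.{0}))}

def cyl (w : List Bool) : Set Cantor := {γ | ∀ i < w.length, γ i = w.getD i false}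

def dropSeq (n : ℕ) (γ : Cantor) : Cantor := fun i => γ (n + i)

lemma appendSeq_append (u v : List Bool) (γ : Cantor) :
    appendSeq (u ++ v) γ = appendSeq u (appendSeq v γ) := by
  funext n
  simp only [appendSeq, List.length_append]
  rcases lt_or_ge n u.length with h | h
  · rw [if_pos h, if_pos (by omega), List.getD_append _ _ _ _ h]
  · rw [if_neg (not_lt.2 h)]
    rcases lt_or_ge n (u.length + v.length) with h' | h'
    · rw [if_pos h', if_pos (by omega), List.getD_append_right _ _ _ _ h]
    · rw [if_neg (not_lt.2 h'), if_neg (by omega), Nat.sub_add_eq]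

lemma appendSeq_mem_cyl (w : List Bool) (γ : Cantor) : appendSeq w γ ∈ cyl w := by
  intro i hi
  simp [appendSeq, hi]

lemma appendSeq_mem_cyl_of_prefix {v b : List Bool} (h : v <+: b) (γ : Cantor) :
    appendSeq b γ ∈ cyl v := by
  obtain ⟨t, rfl⟩ := h
  rw [appendSeq_append]
  exact appendSeq_mem_cyl v _

lemma isOpen_cyl (w : List Bool) : IsOpen (cyl w) := by
  have : cyl w = (Iio w.length).pi fun i => {w.getD i false} := by
    ext γ
    simp [cyl]
  rw [this]
  exact isOpen_set_pi (finite_Iio _) fun _ _ => isOpen_discrete _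

lemma cyl_nonempty (w : List Bool) : (cyl w).Nonempty :=
  ⟨_, appendSeq_mem_cyl w fun _ => false⟩

lemma continuous_appendSeq (w : List Bool) : Continuous (appendSeq w) := by
  refine continuous_pi fun n => ?_
  unfold appendSeq
  split
  · exact continuous_const
  · exact continuous_apply _

lemma dropSeq_appendSeq (w : List Bool) (γ : Cantor) :
    dropSeq w.length (appendSeq w γ) = γ := by
  funext n
  simp [dropSeq, appendSeq]

lemma image_appendSeq (w : List Bool) (U : Set Cantor) :
    appendSeq w '' U = cyl w ∩ dropSeq w.length ⁻¹' U := by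
  ext γ
  constructor
  · rintro ⟨γ', hγ', rfl⟩
    exact ⟨appendSeq_mem_cyl w γ', by rwa [mem_preimage, dropSeq_appendSeq]⟩
  · rintro ⟨hγ, hU⟩
    refine ⟨_, hU, funext fun n => ?_⟩
    simp only [appendSeq, dropSeq]
    split_ifs with h
    · exact (hγ n h).symm
    · congr 1; omega

lemma isOpenMap_appendSeq (w : List Bool) : IsOpenMap (appendSeq w) := by
  intro U hU
  rw [image_appendSeq]
  exact (isOpen_cyl w).inter (hU.preimage (continuous_pi fun _ => continuous_apply _))

lemma exists_cyl_subset {U : Set Cantor} (hU : IsOpen U) (hne : U.Nonempty) :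
    ∃ w, cyl w ⊆ U := by
  obtain ⟨γ, hγ⟩ := hne
  obtain ⟨_, ⟨x, n, rfl⟩, -, hsub⟩ :=
    (PiNat.isTopologicalBasis_cylinders fun _ => Bool).exists_subset_of_mem_open hγ hU
  refine ⟨(List.range n).map x, fun δ hδ => hsub (PiNat.mem_cylinder_iff.2 fun i hi => ?_)⟩
  simpa [hi] using hδ i (by simpa using hi)

section Baire

variable {X : Type*} [TopologicalSpace X]

lemma exists_not_isMeagre_inter {ι : Sort*} [Countable ι] {A : Set X} {Y : ι → Set X}
    (hA : ¬ IsMeagre A) (hAY : A ⊆ ⋃ i, Y i) : ∃ i, ¬ IsMeagre (A ∩ Y i) := by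
  by_contra! h
  refine hA ((isMeagre_iUnion h).mono ?_)
  rw [← inter_iUnion]
  exact subset_inter subset_rfl hAY

lemma not_isMeagre_inter_of_isMeagre_diff {U A : Set X} (hU : ¬ IsMeagre U)
    (hUA : IsMeagre (U \ A)) : ¬ IsMeagre (U ∩ A) :=
  fun h => hU ((hUA.union h).mono (sdiff_union_inter U A).ge)

lemma BaireMeasurableSet.exists_isOpen_isMeagre_diff {A : Set X} (hA : BaireMeasurableSet A)
    (hnm : ¬ IsMeagre A) : ∃ U, IsOpen U ∧ U.Nonempty ∧ IsMeagre (U \ A) := by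
  obtain ⟨U, hU, hAU⟩ := hA.residualEq_isOpen
  refine ⟨U, hU, ?_, hAU.mem_iff.mono fun x hx hxd => hxd.2 (hx.2 hxd.1)⟩
  by_contra hU₀
  rw [not_nonempty_iff_eq_empty] at hU₀
  subst hU₀
  exact hnm (hAU.mem_iff.mono fun x hx hxA => hx.1 hxA)

lemma IsOpen.subset_of_isMeagre_diff [BaireSpace X] {U F : Set X} (hU : IsOpen U)
    (hF : IsClosed F) (h : IsMeagre (U \ F)) : U ⊆ F := by
  by_contra hUF
  exact not_isMeagre_of_isOpen (hU.sdiff hF) (sdiff_nonempty.2 hUF) h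

end Baire

lemma exists_cyl_isMeagre_diff {A : Set Cantor} (hA : BaireMeasurableSet A)
    (hnm : ¬ IsMeagre A) : ∃ w, IsMeagre (cyl w \ A) := by
  obtain ⟨U, hU, hne, hUA⟩ := hA.exists_isOpen_isMeagre_diff hnm
  obtain ⟨w, hw⟩ := exists_cyl_subset hU hne
  exact ⟨w, hUA.mono (sdiff_subset_sdiff_left hw)⟩

lemma exists_cyl_isMeagre_diff_inter {ι : Sort*} [Countable ι] {A : Set Cantor}
    {Y : ι → Set Cantor} (hA : ¬ IsMeagre A) (hAm : MeasurableSet A)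
    (hYm : ∀ i, MeasurableSet (Y i)) (hAY : A ⊆ ⋃ i, Y i) :
    ∃ i w, IsMeagre (cyl w \ (A ∩ Y i)) := by
  obtain ⟨i, hi⟩ := exists_not_isMeagre_inter hA hAY
  obtain ⟨w, hw⟩ := exists_cyl_isMeagre_diff (hAm.inter (hYm i)).baireMeasurableSet hi
  exact ⟨i, w, hw⟩

lemma nonempty_of_isMeagre_cyl_diff {w : List Bool} {A : Set Cantor}
    (h : IsMeagre (cyl w \ A)) : A.Nonempty := by
  by_contra hA
  rw [not_nonempty_iff_eq_empty] at hA
  subst hA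
  exact not_isMeagre_of_isOpen (isOpen_cyl w) (cyl_nonempty w) (by simpa using h)

lemma isMeagre_preimage_appendSeq_compl {v b : List Bool} {D : Set Cantor}
    (hD : IsMeagre (cyl v \ D)) (hvb : v <+: b) : IsMeagre (appendSeq b ⁻¹' Dᶜ) :=
  (hD.preimage_of_isOpenMap (continuous_appendSeq b) (isOpenMap_appendSeq b)).mono
    fun γ hγ => show appendSeq b γ ∈ cyl v \ D from ⟨appendSeq_mem_cyl_of_prefix hvb γ, hγ⟩

section FinerTopologies

open Topology

variable {X Y : Type*}

lemma measurableSet_of_isOpen_of_le [tX : TopologicalSpace X] [PolishSpace X]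
    [MeasurableSpace X] [BorelSpace X] {t : TopologicalSpace X} (ht : PolishSpace (h := t))
    (hle : t ≤ tX) {U : Set X} (hU : IsOpen[t] U) : MeasurableSet U := by
  have hX : ‹MeasurableSpace X› = @borel X tX := BorelSpace.measurable_eq
  rw [hX, ← MeasureTheory.borel_eq_borel_of_le ht ‹_› hle]
  exact MeasurableSpace.measurableSet_generateFrom hU

lemma exists_countable_rectangles_of_isOpen [TopologicalSpace X] [TopologicalSpace Y]
    [SecondCountableTopology X] [SecondCountableTopology Y] {W : Set (X × Y)} (hW : IsOpen W) :
    ∃ R : Set (Set X × Set Y), R.Countable ∧ (∀ p ∈ R, IsOpen p.1 ∧ IsOpen p.2) ∧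
      W = ⋃ p ∈ R, p.1 ×ˢ p.2 := by
  obtain ⟨B₁, hc₁, -, hb₁⟩ := TopologicalSpace.exists_countable_basis X
  obtain ⟨B₂, hc₂, -, hb₂⟩ := TopologicalSpace.exists_countable_basis Y
  set R : Set (Set X × Set Y) := {p | p.1 ∈ B₁ ∧ p.2 ∈ B₂ ∧ p.1 ×ˢ p.2 ⊆ W}
  refine ⟨R, (hc₁.prod hc₂).mono fun p (hp : p ∈ R) => mem_prod.2 ⟨hp.1, hp.2.1⟩,
    fun p hp => ⟨hb₁.isOpen hp.1, hb₂.isOpen hp.2.1⟩, ?_⟩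
  refine (iUnion₂_subset fun p hp => hp.2.2).antisymm' fun x hx => ?_
  obtain ⟨_, ⟨U, hU, V, hV, rfl⟩, hxUV, hUVW⟩ := (hb₁.prod hb₂).exists_subset_of_mem_open hx hW
  exact mem_iUnion₂.2 ⟨(U, V), ⟨hU, hV, hUVW⟩, hxUV⟩

def IsBorelRectUnion [MeasurableSpace X] [MeasurableSpace Y] (W : Set (X × Y)) : Prop :=
  ∃ R : Set (Set X × Set Y), R.Countable ∧ (∀ p ∈ R, MeasurableSet p.1 ∧ MeasurableSet p.2) ∧
    W = ⋃ p ∈ R, p.1 ×ˢ p.2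

lemma IsBorelRectUnion.measurableSet [MeasurableSpace X] [MeasurableSpace Y]
    {W : Set (X × Y)} (hW : IsBorelRectUnion W) : MeasurableSet W := by
  obtain ⟨R, hR, hRm, rfl⟩ := hW
  exact MeasurableSet.biUnion hR fun p hp => (hRm p hp).1.prod (hRm p hp).2

lemma isBorelRectUnion_of_isOpen_of_le [tX : TopologicalSpace X] [tY : TopologicalSpace Y]
    [PolishSpace X] [PolishSpace Y] [MeasurableSpace X] [MeasurableSpace Y]
    [BorelSpace X] [BorelSpace Y] {σ : TopologicalSpace X} {τ : TopologicalSpace Y}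
    (hσ : σ ≤ tX) (hτ : τ ≤ tY) (hσp : PolishSpace (h := σ)) (hτp : PolishSpace (h := τ))
    {W : Set (X × Y)} (hW : IsOpen[@instTopologicalSpaceProd X Y σ τ] W) :
    IsBorelRectUnion W := by
  obtain ⟨R, hR, hRo, rfl⟩ : ∃ R : Set (Set X × Set Y), R.Countable ∧
      (∀ p ∈ R, IsOpen[σ] p.1 ∧ IsOpen[τ] p.2) ∧ W = ⋃ p ∈ R, p.1 ×ˢ p.2 :=
    @exists_countable_rectangles_of_isOpen X Y σ τ
      hσp.toSecondCountableTopology hτp.toSecondCountableTopology W hW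
  exact ⟨R, hR, fun p hp => ⟨measurableSet_of_isOpen_of_le (tX := tX) hσp hσ (hRo p hp).1,
    measurableSet_of_isOpen_of_le (tX := tY) hτp hτ (hRo p hp).2⟩, rfl⟩

end FinerTopologies

instance : PolishSpace Cantor := PolishSpace.mk

lemma countable_Iio_of_card_le_aleph0 {o : Ordinal.{0}} (h : o.card ≤ Cardinal.aleph0) :
    (Iio o).Countable := by
  rw [← Set.countable_coe_iff, ← Cardinal.mk_le_aleph0_iff, Cardinal.mk_Iio_ordinal]
  exact Cardinal.lift_le_aleph0.2 h

lemma Potentially.exists_isBorelRectUnion {X Y : Type} [tX : TopologicalSpace X]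
    [tY : TopologicalSpace Y] [PolishSpace X] [PolishSpace Y] [MeasurableSpace X]
    [MeasurableSpace Y] [BorelSpace X] [BorelSpace Y] {η : Ordinal.{0}} {S : Set (X × Y)}
    (hS : Potentially (DClass η openClass) S) :
    ∃ O : Ordinal.{0} → Set (X × Y), (∀ θ < η, IsBorelRectUnion (O θ)) ∧ S = DiffSet η O := by
  obtain ⟨σ, τ, hσ, hτ, hσp, hτp, O, hO, -, rfl⟩ := hS
  exact ⟨O, fun θ hθ => isBorelRectUnion_of_isOpen_of_le (tX := tX) (tY := tY) hσ hτ hσp hτp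
    (hO θ hθ), rfl⟩

lemma IsBorelRectUnion.exists_cyl_isMeagre_diff {W : Set (Cantor × Cantor)}
    (hW : IsBorelRectUnion W) {f : Cantor → Cantor × Cantor} (hf : Continuous f) {w : List Bool}
    (hw : IsMeagre (cyl w \ f ⁻¹' W)) :
    ∃ U V v, MeasurableSet U ∧ MeasurableSet V ∧ U ×ˢ V ⊆ W ∧
      IsMeagre (cyl v \ (cyl w ∩ f ⁻¹' (U ×ˢ V))) := by
  have hWm := hW.measurableSet
  obtain ⟨R, hR, hRm, rfl⟩ := hW
  have := hR.to_subtype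
  obtain ⟨⟨p, hp⟩, v, hv⟩ := exists_cyl_isMeagre_diff_inter (ι := R)
    (Y := fun p => f ⁻¹' (p.1.1 ×ˢ p.1.2))
    (not_isMeagre_inter_of_isMeagre_diff
      (not_isMeagre_of_isOpen (isOpen_cyl w) (cyl_nonempty w)) hw)
    ((isOpen_cyl w).measurableSet.inter (hf.measurable hWm))
    (fun p => hf.measurable ((hRm p.1 p.2).1.prod (hRm p.1 p.2).2))
    fun γ hγ => let ⟨p, hp, hγp⟩ := mem_iUnion₂.1 hγ.2; mem_iUnion.2 ⟨⟨p, hp⟩, hγp⟩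
  refine ⟨p.1, p.2, v, (hRm p hp).1, (hRm p hp).2,
    subset_biUnion_of_mem (u := fun p : Set Cantor × Set Cantor => p.1 ×ˢ p.2) hp,
    hv.mono (sdiff_subset_sdiff_right fun γ hγ => ⟨hγ.1.1, hγ.2⟩)⟩

def natOfBits (w : List Bool) : ℕ := w.foldr Nat.bit 1

lemma natOfBits_pos (w : List Bool) : 0 < natOfBits w := by
  induction w with
  | nil => simp [natOfBits]
  | cons b t ih =>
    show 0 < Nat.bit b (natOfBits t)
    cases b
    · simpa [Nat.bit] using ih
    · simp [Nat.bit]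

lemma length_lt_natOfBits (w : List Bool) : w.length < natOfBits w := by
  induction w with
  | nil => simp [natOfBits]
  | cons b t ih =>
    show t.length + 1 < Nat.bit b (natOfBits t)
    cases b <;> simp [Nat.bit] <;> omega

lemma bits_natOfBits (w : List Bool) : (natOfBits w).bits = w ++ [true] := by
  induction w with
  | nil => simp [natOfBits]
  | cons b t ih =>
    show (Nat.bit b (natOfBits t)).bits = b :: (t ++ [true])
    rw [Nat.bits_append_bit _ _ fun h => absurd h (natOfBits_pos t).ne', ih]

lemma lexEnum_natOfBits_sub_one (w : List Bool) : lexEnum (natOfBits w.reverse - 1) = w := by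
  rw [lexEnum, Nat.sub_add_cancel (natOfBits_pos _), bits_natOfBits, List.dropLast_concat,
    List.reverse_reverse]

lemma exists_le_prefix_psiFun (v : List Bool) (Q : ℕ) : ∃ q, Q ≤ q ∧ v <+: psiFun q := by
  set w := v ++ List.replicate (Q + 1) false with hw
  refine ⟨2 * (natOfBits w.reverse - 1), ?_, ?_⟩
  · have hlen : w.reverse.length = v.length + (Q + 1) := by simp [hw, add_comm]
    have := length_lt_natOfBits w.reverse
    omega
  · rw [psiFun, Nat.mul_div_cancel_left _ two_pos, lexEnum_natOfBits_sub_one]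
    exact List.prefix_append _ _

lemma exists_child {η ξ θ : Ordinal.{0}} {φ : List ℕ → Option Ordinal.{0}} (hφ : PhiSpec η φ)
    {s : List ℕ} (hs : φ s = some ξ) (hθ : θ < ξ) (v : List Bool) :
    ∃ q ξ', φ (s ++ [q]) = some ξ' ∧ θ ≤ ξ' ∧ v <+: psiFun q := by
  obtain hξ | ⟨a, rfl⟩ | hlim := Ordinal.zero_or_succ_or_isSuccLimit ξ
  · simp [hξ] at hθ
  · obtain ⟨q, -, hq⟩ := exists_le_prefix_psiFun v 0
    rw [Order.succ_eq_add_one] at hs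
    exact ⟨q, a, hφ.2.2.2.2.1 s a q hs, Order.lt_succ_iff.1 hθ, hq⟩
  · obtain ⟨θf, hθf, hmono, -, hcof⟩ := hφ.2.2.2.2.2 s ξ hs hlim
    obtain ⟨n, hn⟩ := hcof θ hθ
    obtain ⟨q, hnq, hq⟩ := exists_le_prefix_psiFun v n
    exact ⟨q, θf q, hθf q, hn.trans (hmono.monotone hnq), hq⟩

noncomputable def pairMap (φ : List ℕ → Option Ordinal.{0}) (s : List ℕ) (γ : Cantor) :
    Cantor × Cantor :=
  (appendSeq (tSeq φ false s) γ, appendSeq (tSeq φ true s) γ)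

lemma continuous_pairMap (φ : List ℕ → Option Ordinal.{0}) (s : List ℕ) :
    Continuous (pairMap φ s) :=
  (continuous_appendSeq _).prodMk (continuous_appendSeq _)

lemma pairMap_nil (φ : List ℕ → Option Ordinal.{0}) (γ : Cantor) : pairMap φ [] γ = (γ, γ) := by
  have hnil : appendSeq [] γ = γ := funext fun n => by simp [appendSeq]
  exact Prod.ext hnil hnil

lemma exists_pairMap_concat (φ : List ℕ → Option Ordinal.{0}) (s : List ℕ) (q : ℕ) :
    ∃ b : Bool → List Bool, (∀ ε, psiFun q <+: b ε) ∧ ∀ γ, pairMap φ (s ++ [q]) γ =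
      ((pairMap φ s (appendSeq (b false) γ)).1, (pairMap φ s (appendSeq (b true) γ)).2) := by
  refine ⟨fun ε => psiFun q ++ (List.replicate
      (cEnum φ (s ++ [q]) - cEnum φ s - (psiFun q).length - 1) false ++ [ε]),
    fun ε => List.prefix_append _ _, fun γ => ?_⟩
  have htSeq : ∀ ε, tSeq φ ε (s ++ [q]) = tSeq φ ε s ++ (psiFun q ++ (List.replicate
      (cEnum φ (s ++ [q]) - cEnum φ s - (psiFun q).length - 1) false ++ [ε])) := by
    intro ε
    simp [tSeq, tAux, List.append_assoc]
  simp only [pairMap, htSeq, appendSeq_append]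

section FirstIndex

variable {Z : Type} {O : Ordinal.{0} → Set Z} {x : Z} {θ θ' : Ordinal.{0}}

def IsFirstIndex (O : Ordinal.{0} → Set Z) (x : Z) (θ : Ordinal.{0}) : Prop :=
  x ∈ O θ ∧ ∀ θ' < θ, x ∉ O θ'

lemma IsFirstIndex.le_of_mem (h : IsFirstIndex O x θ) (h' : x ∈ O θ') : θ ≤ θ' :=
  not_lt.1 fun hlt => h.2 θ' hlt h'

lemma IsFirstIndex.unique (h : IsFirstIndex O x θ) (h' : IsFirstIndex O x θ') : θ = θ' :=
  (h.le_of_mem h'.1).antisymm (h'.le_of_mem h.1)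

lemma exists_isFirstIndex (h : x ∈ O θ) : ∃ θ' ≤ θ, IsFirstIndex O x θ' := by
  obtain ⟨θ', hθ', hmin⟩ := Ordinal.lt_wf.has_min {θ | x ∈ O θ} ⟨θ, h⟩
  exact ⟨θ', not_lt.1 (hmin θ h), hθ', fun θ'' hlt hθ'' => hmin θ'' hθ'' hlt⟩

lemma mem_diffSet_iff_of_isFirstIndex {η : Ordinal.{0}} (h : IsFirstIndex O x θ) (hθ : θ < η) :
    x ∈ DiffSet η O ↔ (OrdEven θ ↔ ¬ OrdEven η) := by
  refine ⟨fun ⟨θ', _, hpar, hfirst⟩ => ?_, fun hpar => ⟨θ, hθ, hpar, h⟩⟩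
  rwa [h.unique hfirst]

lemma measurableSet_isFirstIndex [MeasurableSpace Z] (hO : ∀ θ' ≤ θ, MeasurableSet (O θ'))
    (hθ : (Iio θ).Countable) : MeasurableSet {x | IsFirstIndex O x θ} := by
  have : {x | IsFirstIndex O x θ} = O θ ∩ ⋂ θ' ∈ Iio θ, (O θ')ᶜ := by
    ext
    simp [IsFirstIndex]
  rw [this]
  exact (hO θ le_rfl).inter (.biInter hθ fun θ' h => (hO θ' (le_of_lt h)).compl)

end FirstIndex

section Descent

variable {η : Ordinal.{0}} {φ : List ℕ → Option Ordinal.{0}} {C : Set Cantor}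
  {O : Ordinal.{0} → Set (Cantor × Cantor)}

def Separates (η : Ordinal.{0}) (φ : List ℕ → Option Ordinal.{0}) (C : Set Cantor)
    (O : Ordinal.{0} → Set (Cantor × Cantor)) : Prop :=
  NNset φ false ∩ C ×ˢ C ⊆ DiffSet η O ∧ Disjoint (DiffSet η O) (NNset φ true ∩ C ×ˢ C)

lemma Separates.pairMap_mem_iff (hsep : Separates η φ C O) {s : List ℕ} (hs : φ s ≠ none)
    {γ : Cantor} (hC : pairMap φ s γ ∈ C ×ˢ C) :
    pairMap φ s γ ∈ DiffSet η O ↔ Even s.length := by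
  by_cases he : Even s.length
  · exact iff_of_true (hsep.1 ⟨⟨s, γ, hs, by simp [he], rfl, rfl⟩, hC⟩) he
  · refine iff_of_false (fun h => disjoint_left.1 hsep.2 h ⟨?_, hC⟩) he
    exact ⟨s, γ, hs, by simp [he], rfl, rfl⟩

lemma Separates.parity_of_isFirstIndex (hsep : Separates η φ C O) {s : List ℕ} (hs : φ s ≠ none)
    {γ : Cantor} (hC : pairMap φ s γ ∈ C ×ˢ C) {θ : Ordinal.{0}}
    (hfirst : IsFirstIndex O (pairMap φ s γ) θ) (hθ : θ < η) :
    (OrdEven θ ↔ ¬ OrdEven η) ↔ Even s.length :=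
  (mem_diffSet_iff_of_isFirstIndex hfirst hθ).symm.trans (hsep.pairMap_mem_iff hs hC)

def DescentState (η : Ordinal.{0}) (φ : List ℕ → Option Ordinal.{0}) (C : Set Cantor)
    (O : Ordinal.{0} → Set (Cantor × Cantor)) (s : List ℕ) (θ : Ordinal.{0}) (w : List Bool) :
    Prop :=
  (∃ ξ, φ s = some ξ ∧ θ < ξ) ∧ ((OrdEven θ ↔ ¬ OrdEven η) ↔ Even s.length) ∧
    (∀ γ ∈ cyl w, pairMap φ s γ ∈ C ×ˢ C) ∧ IsMeagre (cyl w \ pairMap φ s ⁻¹' O θ)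

lemma exists_descentState_of_not_isMeagre (hφ : PhiSpec η φ) (hη : (Iio η).Countable)
    (hC : IsClosed C) (hOm : ∀ θ < η, MeasurableSet (O θ)) (hsep : Separates η φ C O)
    {s : List ℕ} {ξ β : Ordinal.{0}} (hs : φ s = some ξ) (hβ : β ≤ ξ) {X : Set Cantor}
    (hX : ¬ IsMeagre X) (hXm : MeasurableSet X) (hXC : ∀ γ ∈ X, pairMap φ s γ ∈ C ×ˢ C)
    (hXO : ∀ γ ∈ X, ∃ θ < β, IsFirstIndex O (pairMap φ s γ) θ) :
    ∃ θ < β, ∃ w, DescentState η φ C O s θ w := by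
  have hβη : β ≤ η := hβ.trans (hφ.2.1 s ξ hs)
  have hβc : (Iio β).Countable := hη.mono (Iio_subset_Iio hβη)
  have := hβc.to_subtype
  obtain ⟨⟨θ, hθβ⟩, w, hw⟩ := exists_cyl_isMeagre_diff_inter (ι := Iio β)
    (Y := fun θ => pairMap φ s ⁻¹' {x | IsFirstIndex O x θ}) hX hXm
    (fun θ => (continuous_pairMap φ s).measurable (measurableSet_isFirstIndex
      (fun θ' h => hOm θ' (h.trans_lt (θ.2.trans_le hβη)))
      (hβc.mono (Iio_subset_Iio θ.2.le))))
    (fun γ hγ => let ⟨θ, hθ, hfirst⟩ := hXO γ hγ; mem_iUnion.2 ⟨⟨θ, hθ⟩, hfirst⟩)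
  have hθη : θ < η := hθβ.trans_le hβη
  obtain ⟨γ₀, hγ₀X, hγ₀⟩ := nonempty_of_isMeagre_cyl_diff hw
  refine ⟨θ, hθβ, w, ⟨ξ, hs, hθβ.trans_le hβ⟩,
    hsep.parity_of_isFirstIndex (by simp [hs]) (hXC γ₀ hγ₀X) hγ₀ hθη, fun γ hγ => ?_,
    hw.mono (sdiff_subset_sdiff_right fun γ hγ => hγ.2.1)⟩
  refine (isOpen_cyl w).subset_of_isMeagre_diff
    ((hC.prod hC).preimage (continuous_pairMap φ s)) (hw.mono ?_) hγ
  exact sdiff_subset_sdiff_right fun γ hγ => hXC γ hγ.1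

lemma exists_initial_descentState (hφ : PhiSpec η φ) (hη : (Iio η).Countable)
    (hOm : ∀ θ < η, MeasurableSet (O θ)) (hsep : Separates η φ C O) (hne : C.Nonempty)
    (hC : IsClopen C) : ∃ θ w, DescentState η φ C O [] θ w := by
  have hs : φ [] ≠ none := by simp [hφ.1]
  have hCC : ∀ γ ∈ C, pairMap φ [] γ ∈ C ×ˢ C := fun γ hγ => by
    rw [pairMap_nil]
    exact ⟨hγ, hγ⟩
  have hCO : ∀ γ ∈ C, ∃ θ < η, IsFirstIndex O (pairMap φ [] γ) θ := fun γ hγ => by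
    obtain ⟨θ, hθ, -, hfirst⟩ := (hsep.pairMap_mem_iff hs (hCC γ hγ)).2 (by simp)
    exact ⟨θ, hθ, hfirst⟩
  obtain ⟨θ, -, w, hw⟩ := exists_descentState_of_not_isMeagre hφ hη hC.1 hOm hsep hφ.1 le_rfl
    (not_isMeagre_of_isOpen hC.2 hne) hC.2.measurableSet hCC hCO
  exact ⟨θ, w, hw⟩

lemma DescentState.exists_lt (hφ : PhiSpec η φ) (hη : (Iio η).Countable) (hC : IsClosed C)
    (hrect : ∀ θ < η, IsBorelRectUnion (O θ)) (hsep : Separates η φ C O)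
    {s : List ℕ} {θ : Ordinal.{0}} {w : List Bool} (h : DescentState η φ C O s θ w) :
    ∃ s' θ' w', θ' < θ ∧ DescentState η φ C O s' θ' w' := by
  obtain ⟨⟨ξ, hs, hθξ⟩, hpar, hwC, hwO⟩ := h
  have hθη : θ < η := hθξ.trans_le (hφ.2.1 s ξ hs)
  obtain ⟨U, V, v, hU, hV, hUV, hv⟩ :=
    (hrect θ hθη).exists_cyl_isMeagre_diff (continuous_pairMap φ s) hwO
  set D := cyl w ∩ pairMap φ s ⁻¹' (U ×ˢ V)
  have hDm : MeasurableSet D :=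
    (isOpen_cyl w).measurableSet.inter ((continuous_pairMap φ s).measurable (hU.prod hV))
  obtain ⟨q, ξ', hq, hθξ', hvq⟩ := exists_child hφ hs hθξ v
  obtain ⟨b, hb, hpairMap⟩ := exists_pairMap_concat φ s q
  set X := appendSeq (b false) ⁻¹' D ∩ appendSeq (b true) ⁻¹' D
  have hXc : IsMeagre Xᶜ := by
    rw [compl_inter]
    exact (isMeagre_preimage_appendSeq_compl hv (hvq.trans (hb false))).union
      (isMeagre_preimage_appendSeq_compl hv (hvq.trans (hb true)))
  have hX : ∀ γ ∈ X, pairMap φ (s ++ [q]) γ ∈ O θ ∧ pairMap φ (s ++ [q]) γ ∈ C ×ˢ C := by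
    rintro γ ⟨h₀, h₁⟩
    rw [hpairMap]
    exact ⟨hUV ⟨h₀.2.1, h₁.2.2⟩, (hwC _ h₀.1).1, (hwC _ h₁.1).2⟩
  have hsq : φ (s ++ [q]) ≠ none := by simp [hq]
  have hXO : ∀ γ ∈ X, ∃ θ' < θ, IsFirstIndex O (pairMap φ (s ++ [q]) γ) θ' := fun γ hγ => by
    obtain ⟨θ', hle, hfirst⟩ := exists_isFirstIndex (hX γ hγ).1
    refine ⟨θ', hle.lt_of_ne fun heq => ?_, hfirst⟩
    have hpar' := hsep.parity_of_isFirstIndex hsq (hX γ hγ).2 hfirst (hle.trans_lt hθη)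
    rw [heq, hpar, List.length_append, List.length_singleton, Nat.even_add_one] at hpar'
    exact iff_not_self hpar'
  obtain ⟨θ', hθ', w', hw'⟩ := exists_descentState_of_not_isMeagre hφ hη hC
    (fun θ h => (hrect θ h).measurableSet) hsep hq hθξ'
    (not_isMeagre_of_mem_residual (by rwa [IsMeagre, compl_compl] at hXc))
    (((continuous_appendSeq _).measurable hDm).inter ((continuous_appendSeq _).measurable hDm))
    (fun γ hγ => (hX γ hγ).2) hXO
  exact ⟨s ++ [q], θ', w', hθ', hw'⟩

lemma not_descentState (hφ : PhiSpec η φ) (hη : (Iio η).Countable) (hC : IsClosed C)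
    (hrect : ∀ θ < η, IsBorelRectUnion (O θ)) (hsep : Separates η φ C O) (θ : Ordinal.{0}) :
    ∀ s w, ¬ DescentState η φ C O s θ w := by
  induction θ using WellFoundedLT.induction with
  | _ θ ih =>
  intro s w h
  obtain ⟨s', θ', w', hθ', h'⟩ := h.exists_lt hφ hη hC hrect hsep
  exact ih θ' hθ' s' w' h'

end Descent

/-- for a countable ordinal `η` and a nonempty clopen `C ⊆ 2^ω`, the set
`ℕ^η_0 ∩ C²` is not separable from `ℕ^η_1 ∩ C²` by a `pot(D_η(Σ^0_1))` set. -/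
theorem statement6 (η : Ordinal.{0}) (hcount : η.card ≤ Cardinal.aleph0)
    (φ : List ℕ → Option Ordinal.{0}) (hφ : PhiSpec η φ)
    (C : Set Cantor) (hne : C.Nonempty) (hcl : IsClopen C) :
    ¬ SepPot (DClass η openClass) (NNset φ false ∩ C ×ˢ C) (NNset φ true ∩ C ×ˢ C) := by
  rintro ⟨S, hS, hA, hB⟩
  obtain ⟨O, hrect, rfl⟩ := hS.exists_isBorelRectUnion
  have hη := countable_Iio_of_card_le_aleph0 hcount
  obtain ⟨θ, w, h⟩ := exists_initial_descentState hφ hη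
    (fun θ hθ => (hrect θ hθ).measurableSet) ⟨hA, hB⟩ hne hcl
  exact not_descentState hφ hη hcl.1 hrect ⟨hA, hB⟩ θ [] w h
end

section
/- Let η ≥ 1 be a countable ordinal. Then the set D_η ⊆ 2^ω is D_η(Σ^0_2)-complete; in particular, D_η belongs to D_η(Σ^0_2)(2^ω) but not to Ď_η(Σ^0_2)(2^ω). -/
open Set Function

/-!
The sets `C_θ` are `Σ^0_2` and increasing, so `D_η ∈ D_η(Σ^0_2)`. For hardness, write each `O_θ`
as a union of closed sets `K_m`, where the first coordinate of `m` names the level `θ` through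
`S_η`, and each `K_m` as a decreasing intersection of clopen sets. Column `m` of `f z` marks the
stages at which `z` lies outside the approximation of `K_m`; it is masked by a reduction `g` of
`O_0` to `C_0`, so that all columns together carry finitely many `1`s exactly when `z ∈ O_0`. Then
`f z ∈ C_θ ↔ z ∈ O_θ` for every `θ < η`, hence `f` reduces `D((O_θ)_θ)` to `D_η`. If `D_η` were
in `Ď_η(Σ^0_2)`, completeness would make `D_η(Σ^0_2)(2^ω)` closed under complements, which
Cantor's diagonal argument refutes using a universal `D_η(Σ^0_2)` subset of `2^ω × 2^ω`.
-/

theorem preimage_diffSet {X Y : Type} {f : X → Y} {η : Ordinal.{0}}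
    {O : Ordinal.{0} → Set X} {C : Ordinal.{0} → Set Y} (h : ∀ θ < η, f ⁻¹' C θ = O θ) :
    f ⁻¹' DiffSet η C = DiffSet η O := by
  ext x
  simp only [DiffSet, mem_preimage, mem_ofPred_eq]
  refine exists_congr fun θ => and_congr_right fun hθ => and_congr_right fun _ => ?_
  rw [← h θ hθ, mem_preimage]
  exact and_congr_right fun _ =>
    forall₂_congr fun θ' hθ' => by rw [← h θ' (hθ'.trans hθ), mem_preimage]

theorem sigma02Class_preimage {X Y : Type} [tX : TopologicalSpace X] [tY : TopologicalSpace Y]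
    {f : X → Y} (hf : Continuous f) {S : Set Y} (hS : sigma02Class Y tY S) :
    sigma02Class X tX (f ⁻¹' S) := by
  obtain ⟨F, hF, rfl⟩ := hS
  exact ⟨fun n => f ⁻¹' F n, fun n => (hF n).preimage hf, preimage_iUnion⟩

theorem DClass_preimage {X Y : Type} [tX : TopologicalSpace X] [tY : TopologicalSpace Y]
    {f : X → Y} (hf : Continuous f) {η : Ordinal.{0}} {S : Set Y}
    (hS : DClass η sigma02Class Y tY S) : DClass η sigma02Class X tX (f ⁻¹' S) := by
  obtain ⟨O, hO, hmono, rfl⟩ := hS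
  exact ⟨fun θ => f ⁻¹' O θ, fun θ hθ => sigma02Class_preimage hf (hO θ hθ),
    fun θ₁ θ₂ h h₂ => preimage_mono (hmono θ₁ θ₂ h h₂), preimage_diffSet fun _ _ => rfl⟩

theorem not_compl_diagonal_of_universal {X : Type} {P : Set X → Prop} {U : Set (X × X)}
    (hU : ∀ A, P A → ∃ a, ∀ x, (a, x) ∈ U ↔ x ∈ A) : ¬ P {x | (x, x) ∈ U}ᶜ := fun hP => by
  obtain ⟨a, ha⟩ := hU _ hP
  exact iff_not_self (ha a)

theorem mem_iff_exists_unpair_of_surjective {Z : Type} {η : Ordinal.{0}}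
    {S : ℕ → Ordinal.{0}} (hS2 : ∀ θ < η, ∃ m, S m = θ)
    {O : Ordinal.{0} → Set Z} (hmono : ∀ θ₁ θ₂, θ₁ ≤ θ₂ → θ₂ < η → O θ₁ ⊆ O θ₂)
    {G : ℕ → ℕ → Set Z} (hG : ∀ k, O (S k) = ⋃ n, G k n) {θ : Ordinal.{0}} (hθ : θ < η)
    (z : Z) : z ∈ O θ ↔ ∃ m : ℕ, S m.unpair.1 ≤ θ ∧ z ∈ G m.unpair.1 m.unpair.2 := by
  constructor
  · intro hz
    obtain ⟨k, rfl⟩ := hS2 θ hθ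
    rw [hG k, mem_iUnion] at hz
    obtain ⟨n, hn⟩ := hz
    exact ⟨Nat.pair k n, by simpa using hn⟩
  · rintro ⟨m, hle, hm⟩
    refine hmono _ θ hle hθ ?_
    rw [hG]
    exact mem_iUnion_of_mem _ hm

theorem mem_Czero_iff_finite {α : Cantor} : α ∈ Czero ↔ {p | α p = true}.Finite := by
  constructor
  · rintro ⟨m, hm⟩
    refine (finite_lt_nat m).subset fun p hp => ?_
    by_contra h
    simp_all [hm p (not_lt.1 h)]
  · intro h
    obtain ⟨M, hM⟩ := h.bddAbove
    refine ⟨M + 1, fun p hp => ?_⟩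
    by_contra h
    exact absurd (hM (Bool.not_eq_false _ ▸ h : α p = true)) (by omega)

theorem isClosed_setOf_forall_eq_false (s : Set ℕ) :
    IsClosed {α : Cantor | ∀ p ∈ s, α p = false} := by
  simp only [ofPred_forall]
  exact isClosed_biInter fun p _ => isClosed_eq (continuous_apply p) continuous_const

theorem zeroDimensional_cantor : ZeroDimensional Cantor := by
  intro x U hU
  obtain ⟨_, ⟨y, n, rfl⟩, hx, hU⟩ := (PiNat.isTopologicalBasis_cylinders _).mem_nhds_iff.1 hU
  refine ⟨_, ⟨?_, PiNat.isOpen_cylinder _ y n⟩, hx, hU⟩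
  rw [PiNat.cylinder_eq_pi]
  exact isClosed_set_pi fun i _ => isClosed_discrete _

theorem sigma02Class_CTheta (S : ℕ → Ordinal.{0}) (θ : Ordinal.{0}) :
    sigma02Class Cantor inferInstance (CTheta S θ) := by
  by_cases hθ : θ = 0
  · refine ⟨fun m => {α | ∀ p ∈ Ici m, α p = false},
      fun m => isClosed_setOf_forall_eq_false _, ?_⟩
    ext α
    simp [CTheta, hθ, Czero]
  · refine ⟨fun m => {α | ∀ p ∈ range (Nat.pair m), α p = false} ∩
      {_α | S m.unpair.1 ≤ θ}, fun m => (isClosed_setOf_forall_eq_false _).inter ?_, ?_⟩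
    · by_cases h : S m.unpair.1 ≤ θ <;> simp [h]
    · ext α
      simp [CTheta, hθ]

theorem CTheta_mono {η : Ordinal.{0}} {S : ℕ → Ordinal.{0}} (hS2 : ∀ θ < η, ∃ m, S m = θ)
    {θ₁ θ₂ : Ordinal.{0}} (h : θ₁ ≤ θ₂) (h₂ : θ₂ < η) : CTheta S θ₁ ⊆ CTheta S θ₂ := by
  intro α hα
  by_cases hθ₂ : θ₂ = 0
  · subst hθ₂
    rwa [nonpos_iff_eq_zero.1 h] at hα
  simp only [CTheta, hθ₂, if_false]
  by_cases hθ₁ : θ₁ = 0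
  · simp only [CTheta, hθ₁, if_true, Czero] at hα
    obtain ⟨M, hM⟩ := hα
    obtain ⟨k, hk⟩ := hS2 0 (h₂.trans_le' zero_le)
    exact ⟨Nat.pair k M, fun p => hM _ ((Nat.right_le_pair k M).trans (Nat.left_le_pair _ p)),
      by simp [hk]⟩
  · simp only [CTheta, hθ₁, if_false] at hα
    obtain ⟨m, hm, hle⟩ := hα
    exact ⟨m, hm, hle.trans h⟩

theorem DEtaSet_mem_DClass {η : Ordinal.{0}} {S : ℕ → Ordinal.{0}}
    (hS2 : ∀ θ < η, ∃ m, S m = θ) : DClass η sigma02Class Cantor inferInstance (DEtaSet η S) :=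
  ⟨CTheta S, fun θ _ => sigma02Class_CTheta S θ, fun _ _ h h₂ => CTheta_mono hS2 h h₂, rfl⟩

section ZeroDimensional

variable {Z : Type} [TopologicalSpace Z] [SecondCountableTopology Z]

theorem ZeroDimensional.exists_isClopen_iUnion_eq (hZ : ZeroDimensional Z) {U : Set Z}
    (hU : IsOpen U) : ∃ W : ℕ → Set Z, (∀ n, IsClopen (W n)) ∧ ⋃ n, W n = U := by
  obtain ⟨T, hTc, hTsub, hTU⟩ :=
    TopologicalSpace.isOpen_sUnion_countable {W | IsClopen W ∧ W ⊆ U} fun W hW => hW.1.isOpen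
  have hcover : ⋃₀ {W | IsClopen W ∧ W ⊆ U} = U := by
    refine (sUnion_subset fun W hW => hW.2).antisymm fun x hx => ?_
    obtain ⟨W, hW, hxW, hWU⟩ := hZ x U (hU.mem_nhds hx)
    exact ⟨W, ⟨hW, hWU⟩, hxW⟩
  obtain ⟨W, hW⟩ := (hTc.insert ∅).exists_eq_range (insert_nonempty ∅ T)
  refine ⟨W, fun n => ?_, ?_⟩
  · have hn : W n ∈ insert ∅ T := hW ▸ mem_range_self n
    rcases hn with h | h
    · exact h ▸ isClopen_empty
    · exact (hTsub h).1
  · rw [← sUnion_range, ← hW, sUnion_insert, empty_union, hTU, hcover]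

theorem ZeroDimensional.exists_isClopen_antitone_iInter_eq (hZ : ZeroDimensional Z)
    {F : Set Z} (hF : IsClosed F) :
    ∃ V : ℕ → Set Z, (∀ p, IsClopen (V p)) ∧ Antitone V ∧ ⋂ p, V p = F := by
  obtain ⟨W, hW, hWF⟩ := hZ.exists_isClopen_iUnion_eq hF.isOpen_compl
  refine ⟨fun p => (accumulate W p)ᶜ, fun p => ?_, fun p q h => ?_, ?_⟩
  · simp only [accumulate_def]
    exact ((finite_le_nat p).isClopen_biUnion fun n _ => hW n).compl
  · exact compl_subset_compl.2 (monotone_accumulate h)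
  · rw [← compl_iUnion, iUnion_accumulate, hWF, compl_compl]

end ZeroDimensional

theorem continuous_boolIndicator_pi {Z : Type} [TopologicalSpace Z] {E : ℕ → Set Z}
    (hE : ∀ l, IsClopen (E l)) : Continuous fun z l => (E l).boolIndicator z :=
  continuous_pi fun l => (continuous_boolIndicator_iff_isClopen _).2 (hE l)

/-- `g z` has a `1` in column `n` exactly at the first `p` with `z ∉ W n p`, where `⋂ p, W n p`
is the `n`-th finite union of the closed pieces of `A`. -/
theorem exists_continuous_preimage_Czero {Z : Type} [tZ : TopologicalSpace Z]
    [SecondCountableTopology Z] (hZ : ZeroDimensional Z) {A : Set Z}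
    (hA : sigma02Class Z tZ A) : ∃ g : Z → Cantor, Continuous g ∧ g ⁻¹' Czero = A := by
  obtain ⟨F, hF, rfl⟩ := hA
  have hacc : ∀ n, IsClosed (accumulate F n) := fun n => by
    rw [accumulate_def]
    exact (finite_le_nat n).isClosed_biUnion fun k _ => hF k
  choose W hW _ hWF using fun n => hZ.exists_isClopen_antitone_iInter_eq (hacc n)
  set E : ℕ → ℕ → Set Z := fun n p => (W n p)ᶜ ∩ ⋂ q < p, W n q
  have hE : ∀ n p, IsClopen (E n p) := fun n p =>
    (hW n p).compl.inter ((finite_lt_nat p).isClopen_biInter fun q _ => hW n q)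
  have hE_subsingleton : ∀ z n, {p | z ∈ E n p}.Subsingleton := by
    intro z n p hp p' hp'
    by_contra hne
    rcases lt_or_gt_of_ne hne with h | h
    · exact hp.1 (mem_iInter₂.1 hp'.2 p h)
    · exact hp'.1 (mem_iInter₂.1 hp.2 p' h)
  have hE_nonempty : ∀ z n, z ∉ accumulate F n → ∃ p, z ∈ E n p := by
    intro z n hz
    rw [← hWF n, mem_iInter, not_forall] at hz
    classical
    exact ⟨Nat.find hz, Nat.find_spec hz, mem_iInter₂.2 fun q hq => not_not.1 (Nat.find_min hz hq)⟩
  refine ⟨fun z l => (E l.unpair.1 l.unpair.2).boolIndicator z,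
    continuous_boolIndicator_pi fun l => hE _ _, ?_⟩
  ext z
  simp only [mem_preimage, mem_iUnion]
  constructor
  · rintro ⟨M, hM⟩
    by_contra hz
    have hzM : z ∉ accumulate F M := fun h => hz (mem_iUnion.1 (accumulate_subset_iUnion M h))
    obtain ⟨p, hp⟩ := hE_nonempty z M hzM
    have := hM (Nat.pair M p) (Nat.left_le_pair M p)
    simp [Set.boolIndicator, hp] at this
  · rintro ⟨j, hj⟩
    refine mem_Czero_iff_finite.2 <| ((finite_lt_nat j).biUnion fun n _ =>
      ((hE_subsingleton z n).finite.image (Nat.pair n))).subset fun l hl => ?_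
    have hl : z ∈ E l.unpair.1 l.unpair.2 := by simpa [Set.boolIndicator] using hl
    refine mem_iUnion₂.2 ⟨l.unpair.1, ?_, l.unpair.2, hl, Nat.pair_unpair l⟩
    by_contra hjn
    have hzacc : z ∈ accumulate F l.unpair.1 :=
      monotone_accumulate (not_lt.1 hjn) (subset_accumulate hj)
    rw [← hWF, mem_iInter] at hzacc
    exact hl.1 (hzacc _)

def maskSeq (α β : Cantor) : Cantor := fun l => α l && β (l.unpair.1 + l.unpair.2)

theorem continuous_maskSeq {Z : Type} [TopologicalSpace Z] {α β : Z → Cantor}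
    (hα : Continuous α) (hβ : Continuous β) : Continuous fun z => maskSeq (α z) (β z) :=
  continuous_pi fun l =>
    (continuous_of_discreteTopology (f := fun b : Bool × Bool => b.1 && b.2)).comp
      ((continuous_apply l |>.comp hα).prodMk (continuous_apply _ |>.comp hβ))

theorem maskSeq_mem_Czero (α : Cantor) {β : Cantor} (hβ : β ∈ Czero) : maskSeq α β ∈ Czero := by
  obtain ⟨N, hN⟩ := hβ
  refine ⟨N ^ 2, fun l hl => ?_⟩
  have hsum : N ≤ l.unpair.1 + l.unpair.2 := by
    by_contra h
    have := Nat.pair_lt_max_add_one_sq l.unpair.1 l.unpair.2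
    rw [Nat.pair_unpair] at this
    have : (max l.unpair.1 l.unpair.2 + 1) ^ 2 ≤ N ^ 2 := Nat.pow_le_pow_left (by omega) 2
    omega
  simp [maskSeq, hN _ hsum]

theorem maskSeq_pair_eq_false {α : Cantor} (β : Cantor) {m : ℕ}
    (hα : ∀ p, α (Nat.pair m p) = false) (p : ℕ) : maskSeq α β (Nat.pair m p) = false := by
  simp [maskSeq, hα p]

/-- The positions `m + p` sampled along a column cover a final segment of `ℕ`. -/
theorem exists_maskSeq_pair_eq_true {α β : Cantor} (hβ : β ∉ Czero) {m : ℕ}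
    (hα : ∃ p₀, ∀ p ≥ p₀, α (Nat.pair m p) = true) : ∃ p, maskSeq α β (Nat.pair m p) = true := by
  obtain ⟨p₀, hα⟩ := hα
  simp only [Czero, mem_ofPred_eq, not_exists, not_forall, Bool.not_eq_false] at hβ
  obtain ⟨q, hq, hβq⟩ := hβ (m + p₀)
  refine ⟨q - m, ?_⟩
  simp [maskSeq, hα (q - m) (by omega), show m + (q - m) = q by omega, hβq]

theorem exists_continuous_preimage_CTheta {Z : Type} [tZ : TopologicalSpace Z]
    [SecondCountableTopology Z] (hZ : ZeroDimensional Z) {η : Ordinal.{0}}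
    {S : ℕ → Ordinal.{0}} (hS1 : ∀ m, S m < η) (hS2 : ∀ θ < η, ∃ m, S m = θ)
    {O : Ordinal.{0} → Set Z} (hO : ∀ θ < η, sigma02Class Z tZ (O θ))
    (hmono : ∀ θ₁ θ₂, θ₁ ≤ θ₂ → θ₂ < η → O θ₁ ⊆ O θ₂) :
    ∃ f : Z → Cantor, Continuous f ∧ ∀ θ < η, f ⁻¹' CTheta S θ = O θ := by
  have h0 : (0 : Ordinal.{0}) < η := (hS1 0).trans_le' zero_le
  choose G hGcl hG using fun k => hO (S k) (hS1 k)
  choose V hV hVanti hVG using fun m : ℕ =>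
    hZ.exists_isClopen_antitone_iInter_eq (hGcl m.unpair.1 m.unpair.2)
  obtain ⟨g, hg, hgO⟩ := exists_continuous_preimage_Czero hZ (hO 0 h0)
  set α : Z → Cantor := fun z l => (V l.unpair.1 l.unpair.2)ᶜ.boolIndicator z
  have hα_zero : ∀ z m, z ∈ G m.unpair.1 m.unpair.2 → ∀ p, α z (Nat.pair m p) = false := by
    intro z m hz p
    rw [← hVG, mem_iInter] at hz
    simp [α, Set.boolIndicator, hz p]
  have hα_one : ∀ z m, z ∉ G m.unpair.1 m.unpair.2 →
      ∃ p₀, ∀ p ≥ p₀, α z (Nat.pair m p) = true := by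
    intro z m hz
    rw [← hVG, mem_iInter, not_forall] at hz
    obtain ⟨p₀, hp₀⟩ := hz
    refine ⟨p₀, fun p hp => ?_⟩
    have hzp : z ∉ V m p := fun h => hp₀ (hVanti m hp h)
    simp [α, Set.boolIndicator, hzp]
  have hg0 : ∀ z, g z ∈ Czero ↔ z ∈ O 0 := fun z => by rw [← hgO, mem_preimage]
  have hcol := fun θ (hθ : θ < η) => mem_iff_exists_unpair_of_surjective hS2 hmono hG hθ
  refine ⟨fun z => maskSeq (α z) (g z),
    continuous_maskSeq (continuous_boolIndicator_pi fun l => (hV _ _).compl) hg,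
    fun θ hθ => ?_⟩
  ext z
  by_cases hθ0 : θ = 0
  · subst hθ0
    simp only [mem_preimage, CTheta, if_true]
    refine ⟨fun ⟨M, hM⟩ => ?_, fun hz => maskSeq_mem_Czero _ ((hg0 z).2 hz)⟩
    by_contra hz
    obtain ⟨k, hk⟩ := hS2 0 h0
    have hzG : z ∉ G (Nat.pair k M).unpair.1 (Nat.pair k M).unpair.2 := fun h =>
      hz ((hcol 0 h0 z).2 ⟨Nat.pair k M, by simp [hk], h⟩)
    obtain ⟨p, hp⟩ := exists_maskSeq_pair_eq_true ((hg0 z).not.2 hz) (hα_one z _ hzG)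
    have := hM _ ((Nat.right_le_pair k M).trans (Nat.left_le_pair _ p))
    simp_all
  · simp only [mem_preimage, CTheta, hθ0, if_false, mem_ofPred_eq]
    constructor
    · rintro ⟨m, hm, hle⟩
      by_contra hz
      have hzG : z ∉ G m.unpair.1 m.unpair.2 := fun h => hz ((hcol θ hθ z).2 ⟨m, hle, h⟩)
      obtain ⟨p, hp⟩ := exists_maskSeq_pair_eq_true
        ((hg0 z).not.2 fun h => hz (hmono 0 θ zero_le hθ h)) (hα_one z m hzG)
      simp [hm p] at hp
    · intro hz
      obtain ⟨m, hle, hzG⟩ := (hcol θ hθ z).1 hz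
      exact ⟨m, maskSeq_pair_eq_false _ (hα_zero z m hzG), hle⟩

/-- The code `β` of a closed set `C` marks the (codes of) basic cylinders disjoint from `C`. -/
theorem exists_isClosed_universal : ∃ U : Set (Cantor × Cantor), IsClosed U ∧
    ∀ C : Set Cantor, IsClosed C → ∃ β : Cantor, ∀ x, (β, x) ∈ U ↔ x ∈ C := by
  classical
  refine ⟨{q | ∀ (y : Cantor) (n : ℕ),
    q.1 (Encodable.encode (PiNat.res y n)) = true → q.2 ∉ PiNat.cylinder y n}, ?_, ?_⟩
  · simp only [ofPred_forall]
    refine isClosed_iInter fun y => isClosed_iInter fun n => isClosed_imp ?_ ?_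
    · exact (isOpen_discrete {true}).preimage
        ((continuous_apply (A := fun _ : ℕ => Bool) _).comp continuous_fst)
    · exact (PiNat.isOpen_cylinder _ y n).isClosed_compl.preimage continuous_snd
  intro C hC
  refine ⟨fun k => decide (∀ (y : Cantor) (n : ℕ), Encodable.encode (PiNat.res y n) = k →
    Disjoint C (PiNat.cylinder y n)), fun x => ⟨fun hx => ?_, fun hx y n hy => ?_⟩⟩
  · by_contra hxC
    obtain ⟨n, hn⟩ := PiNat.exists_disjoint_cylinder hC hxC
    refine hx x n ?_ (PiNat.self_mem_cylinder x n)
    simp only [decide_eq_true_eq]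
    intro y n' hy
    have hres := Encodable.encode_injective hy
    obtain rfl : n' = n := by simpa using congrArg List.length hres
    rwa [PiNat.cylinder_eq_res, hres, ← PiNat.cylinder_eq_res]
  · simp only [decide_eq_true_eq] at hy
    exact disjoint_left.1 (hy y n rfl) hx

theorem exists_DClass_universal {η : Ordinal.{0}} {S : ℕ → Ordinal.{0}}
    (hS1 : ∀ m, S m < η) (hS2 : ∀ θ < η, ∃ m, S m = θ) :
    ∃ U : Set (Cantor × Cantor), DClass η sigma02Class (Cantor × Cantor) inferInstance U ∧
      ∀ A, DClass η sigma02Class Cantor inferInstance A →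
        ∃ γ : Cantor, ∀ x, (γ, x) ∈ U ↔ x ∈ A := by
  obtain ⟨U, hU, huniv⟩ := exists_isClosed_universal
  set col : ℕ → Cantor × Cantor → Cantor × Cantor := fun k q => (fun i => q.1 (Nat.pair k i), q.2)
  have hcol : ∀ k, Continuous (col k) := fun k =>
    (continuous_pi fun i => (continuous_apply _).comp continuous_fst).prodMk continuous_snd
  set O : Ordinal.{0} → Set (Cantor × Cantor) :=
    fun θ => {q | ∃ k : ℕ, S k.unpair.1 ≤ θ ∧ col k q ∈ U}
  have hO : ∀ θ, sigma02Class (Cantor × Cantor) inferInstance (O θ) := by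
    refine fun θ => ⟨fun k => col k ⁻¹' U ∩ {_q | S k.unpair.1 ≤ θ}, fun k => ?_, ?_⟩
    · by_cases h : S k.unpair.1 ≤ θ <;> simp [h, hU.preimage (hcol k)]
    · ext q
      simp [O, and_comm]
  refine ⟨DiffSet η O, ⟨O, fun θ _ => hO θ,
    fun θ₁ θ₂ h _ q ⟨k, hk, hq⟩ => ⟨k, hk.trans h, hq⟩, rfl⟩, ?_⟩
  rintro _ ⟨O', hO', hmono, rfl⟩
  choose G hGcl hG using fun k => hO' (S k) (hS1 k)
  choose β hβ using fun m : ℕ => huniv _ (hGcl m.unpair.1 m.unpair.2)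
  refine ⟨fun l => β l.unpair.1 l.unpair.2, fun x => ?_⟩
  have hsec : ∀ θ < η, (fun x => ((fun l => β l.unpair.1 l.unpair.2, x) : Cantor × Cantor)) ⁻¹'
      O θ = O' θ := by
    intro θ hθ
    ext x
    rw [mem_iff_exists_unpair_of_surjective hS2 hmono hG hθ]
    simp [O, col, hβ]
  rw [← preimage_diffSet hsec, mem_preimage]

theorem exists_continuous_preimage_DEtaSet {Z : Type} [tZ : TopologicalSpace Z]
    [SecondCountableTopology Z] (hZ : ZeroDimensional Z) {η : Ordinal.{0}}
    {S : ℕ → Ordinal.{0}} (hS1 : ∀ m, S m < η) (hS2 : ∀ θ < η, ∃ m, S m = θ) {A : Set Z}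
    (hA : DClass η sigma02Class Z tZ A) :
    ∃ f : Z → Cantor, Continuous f ∧ A = f ⁻¹' DEtaSet η S := by
  obtain ⟨O, hO, hmono, rfl⟩ := hA
  obtain ⟨f, hf, hfO⟩ := exists_continuous_preimage_CTheta hZ hS1 hS2 hO hmono
  exact ⟨f, hf, (preimage_diffSet hfO).symm⟩

theorem statement18_general (η : Ordinal.{0})
    (Sη : ℕ → Ordinal.{0}) (hS1 : ∀ m, Sη m < η) (hS2 : ∀ θ, θ < η → ∃ m, Sη m = θ) :
    DClass η sigma02Class Cantor inferInstance (DEtaSet η Sη) ∧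
    (∀ (Z : Type) [tZ : TopologicalSpace Z], PolishSpace Z → ZeroDimensional Z →
      ∀ A : Set Z, DClass η sigma02Class Z tZ A →
        ∃ f : Z → Cantor, Continuous f ∧ A = f ⁻¹' (DEtaSet η Sη)) ∧
    ¬ dualClass (DClass η sigma02Class) Cantor inferInstance (DEtaSet η Sη) := by
  refine ⟨DEtaSet_mem_DClass hS2, fun Z _ hZ_polish hZ A hA => ?_, fun hdual => ?_⟩
  · have := hZ_polish.toSecondCountableTopology
    exact exists_continuous_preimage_DEtaSet hZ hS1 hS2 hA
  obtain ⟨U, hU, huniv⟩ := exists_DClass_universal hS1 hS2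
  obtain ⟨f, hf, hfU⟩ := exists_continuous_preimage_DEtaSet zeroDimensional_cantor hS1 hS2
    (DClass_preimage (continuous_id.prodMk continuous_id) hU)
  refine not_compl_diagonal_of_universal huniv ?_
  rw [show {x | (x, x) ∈ U} = f ⁻¹' DEtaSet η Sη from hfU, ← preimage_compl]
  exact DClass_preimage hf hdual

/-- for `η ≥ 1` countable, the set `D_η ⊆ 2^ω` is `D_η(Σ^0_2)`-complete; in
particular it belongs to `D_η(Σ^0_2)(2^ω)` but not to `Ď_η(Σ^0_2)(2^ω)`. -/
theorem statement18 (η : Ordinal.{0}) (hη : 1 ≤ η) (hcount : η.card ≤ Cardinal.aleph0)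
    (Sη : ℕ → Ordinal.{0}) (hS1 : ∀ m, Sη m < η) (hS2 : ∀ θ, θ < η → ∃ m, Sη m = θ) :
    DClass η sigma02Class Cantor inferInstance (DEtaSet η Sη) ∧
    (∀ (Z : Type) [tZ : TopologicalSpace Z], PolishSpace Z → ZeroDimensional Z →
      ∀ A : Set Z, DClass η sigma02Class Z tZ A →
        ∃ f : Z → Cantor, Continuous f ∧ A = f ⁻¹' (DEtaSet η Sη)) ∧
    ¬ dualClass (DClass η sigma02Class) Cantor inferInstance (DEtaSet η Sη) :=
  statement18_general η Sη hS1 hS2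
end
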